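/- Let n > 0, 0 < δ < β₀, f(x) = x/(1 + xⁿ), x* = (β₀/δ − 1)^{1/n} and β₁ = f′(x*). Then the conditions β₁ < 0 and β₁ < −δ/(β₀(1 − 2h(x₀))) hold if and only if n > (2(1 − h(x₀))/(1 − 2h(x₀)))·β₀/(β₀ − δ). -/

import Mathlib

/-!
At the equilibrium `x*ⁿ = β₀/δ − 1`, so the quotient rule gives `β₁ = δ(β₀ − n(β₀ − δ))/β₀²`.
Every positive solution of `x = tan x` exceeds `π`, so `h(x₀) ≤ 1/x₀ < 1/2`. Hence the bound
`−δ/(β₀(1 − 2h(x₀)))` is negative, `β₁ < 0` follows from the second condition, and the second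
condition is linear in `n` with a positive coefficient once the denominators are cleared.
-/

/-- `h(x) = sin(x)/x`. -/
noncomputable def hfun (x : ℝ) : ℝ := Real.sin x / x

/-- `x₀`, the smallest `x > 0` with `x = tan x` and `h(x) > 0` (numerically `x₀ ≈ 7.725`,
`h(x₀) ≈ 0.1284`). -/
noncomputable def xZero : ℝ := sInf {x : ℝ | 0 < x ∧ x = Real.tan x ∧ 0 < hfun x}

open Real

theorem pi_lt_of_eq_tan {x : ℝ} (hx : 0 < x) (htan : x = tan x) : π < x := by
  by_contra! hxπ
  rcases lt_or_ge x (π / 2) with hlt | hge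
  · exact (lt_tan hx hlt).ne htan
  · have htan_nonpos : tan x ≤ 0 := by
      rw [tan_eq_sin_div_cos]
      exact div_nonpos_of_nonneg_of_nonpos (sin_nonneg_of_nonneg_of_le_pi hx.le hxπ)
        (cos_nonpos_of_pi_div_two_le_of_le hge (by linarith [pi_pos]))
    linarith

theorem hfun_lt_half_of_two_lt {x : ℝ} (hx : 2 < x) : hfun x < 1 / 2 := by
  calc hfun x ≤ 1 / x := div_le_div_of_nonneg_right (sin_le_one x) (by linarith)
    _ < 1 / 2 := one_div_lt_one_div_of_lt two_pos hx

theorem hfun_xZero_lt_half : hfun xZero < 1 / 2 := by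
  rcases Set.eq_empty_or_nonempty {x : ℝ | 0 < x ∧ x = tan x ∧ 0 < hfun x} with hS | hS
  · -- junk values: `sInf ∅ = 0` and `sin 0 / 0 = 0`
    rw [xZero, hS, Real.sInf_empty, hfun, div_zero]
    norm_num
  · have hπ : π ≤ xZero := le_csInf hS fun x hx => (pi_lt_of_eq_tan hx.1 hx.2.1).le
    exact hfun_lt_half_of_two_lt (by linarith [pi_gt_three])

theorem hasDerivAt_div_one_add_rpow {n x : ℝ} (hx : 0 < x) :
    HasDerivAt (fun y => y / (1 + y ^ n)) ((1 + (1 - n) * x ^ n) / (1 + x ^ n) ^ 2) x := by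
  refine ((hasDerivAt_id x).div ((hasDerivAt_rpow_const (Or.inl hx.ne')).const_add 1)
    (by positivity)).congr_deriv ?_
  rw [id, rpow_sub_one hx.ne']
  field_simp
  ring

theorem deriv_div_one_add_rpow_at_equilibrium {n δ β₀ : ℝ} (hn : n ≠ 0) (hδ : 0 < δ)
    (hδβ : δ < β₀) :
    deriv (fun y => y / (1 + y ^ n)) ((β₀ / δ - 1) ^ (1 / n : ℝ)) =
      δ * (β₀ - n * (β₀ - δ)) / β₀ ^ 2 := by
  have ha : 0 < β₀ / δ - 1 := by rw [sub_pos, one_lt_div hδ]; exact hδβ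
  have hxn : ((β₀ / δ - 1) ^ (1 / n : ℝ)) ^ n = β₀ / δ - 1 := by
    rw [one_div, rpow_inv_rpow ha.le hn]
  rw [(hasDerivAt_div_one_add_rpow (rpow_pos_of_pos ha _)).deriv, hxn]
  field_simp
  ring

theorem hopf_condition_iff {n δ β₀ H : ℝ} (hδ : 0 < δ) (hδβ : δ < β₀) (hH : H < 1 / 2) :
    δ * (β₀ - n * (β₀ - δ)) / β₀ ^ 2 < -δ / (β₀ * (1 - 2 * H)) ↔
      n > (2 * (1 - H) / (1 - 2 * H)) * (β₀ / (β₀ - δ)) := by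
  have hβ₀ : 0 < β₀ := hδ.trans hδβ
  have hc : 0 < 1 - 2 * H := by linarith
  have hgap : 0 < β₀ - δ := by linarith
  rw [neg_div, lt_neg, ← neg_div, div_lt_div_iff₀ (by positivity) (by positivity), gt_iff_lt,
    div_mul_div_comm, div_lt_iff₀ (by positivity)]
  constructor <;> intro h <;> nlinarith [mul_pos hδ hβ₀]

/-- for the Hill nonlinearity `f(x) = x/(1 + xⁿ)`, with equilibrium
`x* = (β₀/δ − 1)^{1/n}` and `β₁ = f′(x*)`, the hypotheses `β₁ < 0` and
`β₁ < −δ/(β₀(1 − 2h(x₀)))` of the Hopf bifurcation theorem hold iff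
`n > (2(1 − h(x₀))/(1 − 2h(x₀))) β₀/(β₀ − δ)`. -/
theorem hill_hopf_condition
    (n δ β₀ : ℝ) (hn : 0 < n) (hδ : 0 < δ) (hδβ : δ < β₀)
    (f : ℝ → ℝ) (hf : ∀ x : ℝ, f x = x / (1 + x ^ n))
    (xstar : ℝ) (hxstar : xstar = (β₀ / δ - 1) ^ (1 / n : ℝ))
    (β₁ : ℝ) (hβ₁ : β₁ = deriv f xstar) :
    (β₁ < 0 ∧ β₁ < -δ / (β₀ * (1 - 2 * hfun xZero))) ↔
      n > (2 * (1 - hfun xZero) / (1 - 2 * hfun xZero)) * (β₀ / (β₀ - δ)) := by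
  obtain rfl : f = fun x => x / (1 + x ^ n) := funext hf
  rw [hβ₁, hxstar, deriv_div_one_add_rpow_at_equilibrium hn.ne' hδ hδβ]
  have hbound_neg : -δ / (β₀ * (1 - 2 * hfun xZero)) < 0 :=
    div_neg_of_neg_of_pos (neg_neg_of_pos hδ)
      (mul_pos (hδ.trans hδβ) (by linarith [hfun_xZero_lt_half]))
  rw [and_iff_right_of_imp fun h => h.trans hbound_neg]
  exact hopf_condition_iff hδ hδβ hfun_xZero_lt_half
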